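/- Let 𝒜 ⊂ M(N,M) and ℬ ⊂ M(M,N) be finite sets of matrices such that the matrix products AₙBₙ⋯A₁B₁ are path-dependent stabilizable by choice of the Bₙ. Then there exist constants C > 0 and λ ∈ (0,1) such that for any sequence {Aₙ ∈ 𝒜} there is a sequence {Bₙ ∈ ℬ} with ‖AₙBₙ⋯A₁B₁‖ ≤ Cλⁿ for all n = 1, 2, … . -/
import Mathlib
def prodAB {N M : ℕ} (A : ℕ → Matrix (Fin N) (Fin M) ℝ)
    (B : ℕ → Matrix (Fin M) (Fin N) ℝ) : ℕ → Matrix (Fin N) (Fin N) ℝ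
  | 0 => 1
  | n + 1 => (A (n + 1) * B (n + 1)) * prodAB A B n

lemma prodAB_congr {N M : ℕ} (A A' : ℕ → Matrix (Fin N) (Fin M) ℝ)
    (B B' : ℕ → Matrix (Fin M) (Fin N) ℝ) (n : ℕ)
    (hA : ∀ i, 1 ≤ i → i ≤ n → A i = A' i) (hB : ∀ i, 1 ≤ i → i ≤ n → B i = B' i) :
    prodAB A B n = prodAB A' B' n := by
  induction n with
  | zero => rfl
  | succ n ih =>
    simp only [prodAB]
    rw [hA (n+1) (by omega) le_rfl, hB (n+1) (by omega) le_rfl,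
      ih (fun i h1 h2 => hA i h1 (by omega)) (fun i h1 h2 => hB i h1 (by omega))]

lemma prodAB_add {N M : ℕ} (A : ℕ → Matrix (Fin N) (Fin M) ℝ)
    (B : ℕ → Matrix (Fin M) (Fin N) ℝ) (m k : ℕ) :
    prodAB A B (m + k) = prodAB (fun i => A (m + i)) (fun i => B (m + i)) k * prodAB A B m := by
  induction k with
  | zero => simp [prodAB]
  | succ k ih =>
    rw [Nat.add_succ]
    simp only [prodAB]
    rw [ih, ← mul_assoc]
    rfl

def Bad {N M : ℕ} (ν : Matrix (Fin N) (Fin N) ℝ → ℝ)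
    (ℬ : Finset (Matrix (Fin M) (Fin N) ℝ)) (n : ℕ)
    (A : ℕ → Matrix (Fin N) (Fin M) ℝ) : Prop :=
  ∀ B : ℕ → Matrix (Fin M) (Fin N) ℝ, (∀ i, B i ∈ ℬ) →
    ∀ k, 1 ≤ k → k ≤ n → 1/2 < ν (prodAB A B k)

def sys {N M : ℕ} (b₀ : Matrix (Fin M) (Fin N) ℝ)
    (g : (ℕ → Matrix (Fin N) (Fin M) ℝ) → (ℕ → Matrix (Fin M) (Fin N) ℝ) × ℕ)
    (A : ℕ → Matrix (Fin N) (Fin M) ℝ) : ℕ → ℕ × (ℕ → Matrix (Fin M) (Fin N) ℝ)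
  | 0 => (0, fun _ => b₀)
  | j+1 =>
      ((sys b₀ g A j).1 + (g (fun i => A ((sys b₀ g A j).1 + i))).2,
       fun i => if i ≤ (sys b₀ g A j).1 then (sys b₀ g A j).2 i
                else (g (fun i => A ((sys b₀ g A j).1 + i))).1 (i - (sys b₀ g A j).1))

lemma bad_anti {N M : ℕ} (ν : Matrix (Fin N) (Fin N) ℝ → ℝ)
    (ℬ : Finset (Matrix (Fin M) (Fin N) ℝ)) {m n : ℕ} (hnm : n ≤ m)
    {A : ℕ → Matrix (Fin N) (Fin M) ℝ} (h : Bad ν ℬ m A) : Bad ν ℬ n A :=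
  fun B hB k hk1 hk2 => h B hB k hk1 (le_trans hk2 hnm)

lemma bad_congr {N M : ℕ} (ν : Matrix (Fin N) (Fin N) ℝ → ℝ)
    (ℬ : Finset (Matrix (Fin M) (Fin N) ℝ)) {n : ℕ}
    {A A' : ℕ → Matrix (Fin N) (Fin M) ℝ} (hAA : ∀ i, i ≤ n → A i = A' i)
    (h : Bad ν ℬ n A) : Bad ν ℬ n A' := by
  intro B hB k hk1 hk2
  rw [← prodAB_congr A A' B B k (fun i h1 h2 => hAA i (le_trans h2 hk2))
    (fun _ _ _ => rfl)]
  exact h B hB k hk1 hk2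

lemma exists_uniform {N M : ℕ} (ν : Matrix (Fin N) (Fin N) ℝ → ℝ)
    (𝒜 : Finset (Matrix (Fin N) (Fin M) ℝ)) (ℬ : Finset (Matrix (Fin M) (Fin N) ℝ))
    (hstab : ∀ A : ℕ → Matrix (Fin N) (Fin M) ℝ, (∀ n, A n ∈ 𝒜) →
      ∃ B : ℕ → Matrix (Fin M) (Fin N) ℝ, (∀ n, B n ∈ ℬ) ∧
        Filter.Tendsto (fun n => ν (prodAB A B n)) Filter.atTop (nhds 0)) :
    ∃ n₀ : ℕ, 1 ≤ n₀ ∧ ∀ A : ℕ → Matrix (Fin N) (Fin M) ℝ,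
      (∀ i, A i ∈ 𝒜) → ¬ Bad ν ℬ n₀ A := by
  by_contra hc
  push_neg at hc
  -- hc : ∀ n₀, 1 ≤ n₀ → ∃ A, (∀ i, A i ∈ 𝒜) ∧ Bad ν ℬ n₀ A
  have hw : ∀ n : ℕ, ∃ A, (∀ i, A i ∈ 𝒜) ∧ Bad ν ℬ (n+1) A := fun n => hc (n+1) (by omega)
  choose w hw1 hw2 using hw
  set 𝒰 : Ultrafilter ℕ := Ultrafilter.of Filter.atTop with h𝒰
  have h𝒰le : (𝒰 : Filter ℕ) ≤ Filter.atTop := Ultrafilter.of_le _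
  have hval : ∀ i : ℕ, ∃ a ∈ 𝒜, {m | w m i = a} ∈ 𝒰 := by
    intro i
    by_contra h
    push_neg at h
    have hcompl : ∀ a ∈ 𝒜, {m | w m i = a}ᶜ ∈ 𝒰 := fun a ha =>
      (Ultrafilter.compl_mem_iff_notMem).mpr (h a ha)
    have hI : (⋂ a ∈ 𝒜, {m | w m i = a}ᶜ) ∈ 𝒰 :=
      (Filter.biInter_finset_mem 𝒜).mpr hcompl
    obtain ⟨m, hm⟩ := Ultrafilter.nonempty_of_mem hI
    simp only [Set.mem_iInter, Set.mem_compl_iff, Set.mem_setOf_eq] at hm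
    exact hm (w m i) (hw1 m i) rfl
  choose Af hAf1 hAf2 using hval
  have hBadAll : ∀ n, Bad ν ℬ n Af := by
    intro n
    have hS : ((⋂ i ∈ Finset.range (n+1), {m | w m i = Af i}) ∩ {m | n ≤ m}) ∈ 𝒰 := by
      refine Filter.inter_mem ((Filter.biInter_finset_mem _).mpr fun i _ => hAf2 i) ?_
      exact h𝒰le (Filter.mem_atTop n)
    obtain ⟨m, hm⟩ := Ultrafilter.nonempty_of_mem hS
    simp only [Set.mem_inter_iff, Set.mem_iInter, Finset.mem_range, Set.mem_setOf_eq] at hm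
    have hbm : Bad ν ℬ n (w m) := bad_anti ν ℬ (by omega : n ≤ m+1) (hw2 m)
    exact bad_congr ν ℬ (fun i hi => hm.1 i (by omega)) hbm
  obtain ⟨B, hB, htend⟩ := hstab Af hAf1
  have hev : ∀ᶠ k in Filter.atTop, ν (prodAB Af B k) < 1/2 := by
    have : Set.Iio ((1:ℝ)/2) ∈ nhds (0:ℝ) := Iio_mem_nhds (by norm_num)
    exact htend this
  obtain ⟨k₀, hk₀⟩ := hev.exists_forall_of_atTop
  have := hBadAll (k₀ + 1) B hB (k₀ + 1) (by omega) le_rfl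
  have := hk₀ (k₀ + 1) (by omega)
  linarith

theorem stmt_2 (N M : ℕ) (ν : Matrix (Fin N) (Fin N) ℝ → ℝ)
    (hnonneg : ∀ X, 0 ≤ ν X) (hzero : ∀ X, ν X = 0 ↔ X = 0)
    (htri : ∀ X Y, ν (X + Y) ≤ ν X + ν Y)
    (hsmul : ∀ (c : ℝ) (X), ν (c • X) = |c| * ν X)
    (hsub : ∀ X Y, ν (X * Y) ≤ ν X * ν Y)
    (𝒜 : Finset (Matrix (Fin N) (Fin M) ℝ)) (ℬ : Finset (Matrix (Fin M) (Fin N) ℝ))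
    (hstab : ∀ A : ℕ → Matrix (Fin N) (Fin M) ℝ, (∀ n, A n ∈ 𝒜) →
      ∃ B : ℕ → Matrix (Fin M) (Fin N) ℝ, (∀ n, B n ∈ ℬ) ∧
        Filter.Tendsto (fun n => ν (prodAB A B n)) Filter.atTop (nhds 0)) :
    ∃ C > 0, ∃ lam : ℝ, 0 < lam ∧ lam < 1 ∧
      ∀ A : ℕ → Matrix (Fin N) (Fin M) ℝ, (∀ n, A n ∈ 𝒜) →
        ∃ B : ℕ → Matrix (Fin M) (Fin N) ℝ, (∀ n, B n ∈ ℬ) ∧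
          ∀ n, 1 ≤ n → ν (prodAB A B n) ≤ C * lam ^ n := by
  by_cases h𝒜 : ∃ a, a ∈ 𝒜
  case neg =>
    refine ⟨1, one_pos, 1/2, by norm_num, by norm_num, fun A hA => ?_⟩
    exact absurd ⟨A 0, hA 0⟩ h𝒜
  obtain ⟨a₀, ha₀⟩ := h𝒜
  obtain ⟨B₀, hB₀, -⟩ := hstab (fun _ => a₀) (fun _ => ha₀)
  set b₀ := B₀ 0 with hb₀def
  have hb₀ : b₀ ∈ ℬ := hB₀ 0
  obtain ⟨n₀, hn₀1, hn₀2⟩ := exists_uniform ν 𝒜 ℬ hstab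
  -- constants
  have hprodne : ((a₀, b₀) : _ × _) ∈ 𝒜 ×ˢ ℬ := Finset.mem_product.mpr ⟨ha₀, hb₀⟩
  set K : ℝ := max (max 1 (ν 1)) ((𝒜 ×ˢ ℬ).sup' ⟨_, hprodne⟩ (fun p => ν (p.1 * p.2)))
    with hKdef
  have hK1 : (1:ℝ) ≤ K := le_trans (le_max_left _ _) (le_max_left _ _)
  have hK0 : (0:ℝ) ≤ K := by linarith
  have hKν1 : ν 1 ≤ K := le_trans (le_max_right _ _) (le_max_left _ _)
  have hKmem : ∀ a ∈ 𝒜, ∀ b ∈ ℬ, ν (a * b) ≤ K := by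
    intro a ha b hb
    refine le_trans ?_ (le_max_right _ _)
    exact Finset.le_sup' (fun p => ν (p.1 * p.2))
      (show ((a, b) : _ × _) ∈ 𝒜 ×ˢ ℬ from Finset.mem_product.mpr ⟨ha, hb⟩)
  have hn₀pos : (0:ℝ) < n₀ := by exact_mod_cast hn₀1
  set lam : ℝ := (1/2 : ℝ) ^ ((n₀ : ℝ)⁻¹) with hlamdef
  have hlam0 : 0 < lam := Real.rpow_pos_of_pos (by norm_num) _
  have hlam1 : lam < 1 := Real.rpow_lt_one (by norm_num) (by norm_num) (by positivity)
  refine ⟨K ^ n₀ * K * K * 2, by positivity, lam, hlam0, hlam1, ?_⟩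
  -- choice function
  have key' : ∀ A' : ℕ → Matrix (Fin N) (Fin M) ℝ,
      ∃ Bk : (ℕ → Matrix (Fin M) (Fin N) ℝ) × ℕ,
        (∀ i, Bk.1 i ∈ ℬ) ∧ 1 ≤ Bk.2 ∧ Bk.2 ≤ n₀ ∧
        ((∀ i, A' i ∈ 𝒜) → ν (prodAB A' Bk.1 Bk.2) ≤ 1/2) := by
    intro A'
    by_cases hA' : ∀ i, A' i ∈ 𝒜
    · have h2 := hn₀2 A' hA'
      rw [Bad] at h2
      push_neg at h2
      obtain ⟨B, hB, k, hk1, hk2, hk3⟩ := h2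
      exact ⟨(B, k), hB, hk1, hk2, fun _ => hk3⟩
    · exact ⟨(fun _ => b₀, 1), fun _ => hb₀, le_rfl, hn₀1, fun h => absurd h hA'⟩
  choose g hg1 hg2 hg3 hg4 using key'
  intro A hA
  have hmem : ∀ j i, (sys b₀ g A j).2 i ∈ ℬ := by
    intro j
    induction j with
    | zero => intro i; exact hb₀
    | succ j ih =>
      intro i
      simp only [sys]
      split
      · exact ih i
      · exact hg1 _ _
  refine ⟨fun i => (sys b₀ g A i).2 i, fun i => hmem i i, ?_⟩
  have ht_step : ∀ j, (sys b₀ g A (j+1)).1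
      = (sys b₀ g A j).1 + (g (fun i => A ((sys b₀ g A j).1 + i))).2 := fun j => rfl
  have ht_lb : ∀ j, j ≤ (sys b₀ g A j).1 := by
    intro j
    induction j with
    | zero => exact Nat.zero_le _
    | succ j ih =>
      rw [ht_step j]
      have := hg2 (fun i => A ((sys b₀ g A j).1 + i))
      omega
  have ht_ub : ∀ j, (sys b₀ g A j).1 ≤ j * n₀ := by
    intro j
    induction j with
    | zero => exact Nat.zero_le _
    | succ j ih =>
      rw [ht_step j, Nat.succ_mul]
      have := hg3 (fun i => A ((sys b₀ g A j).1 + i))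
      omega
  have ht_mono : ∀ j j', j ≤ j' → (sys b₀ g A j).1 ≤ (sys b₀ g A j').1 := by
    have : Monotone (fun j => (sys b₀ g A j).1) := by
      apply monotone_nat_of_le_succ
      intro j
      rw [ht_step j]
      omega
    exact fun j j' h => this h
  have hcoh : ∀ j i, i ≤ (sys b₀ g A j).1 →
      (sys b₀ g A (j+1)).2 i = (sys b₀ g A j).2 i := by
    intro j i h
    simp only [sys]
    rw [if_pos h]
  have hcoh' : ∀ j j', j ≤ j' → ∀ i, i ≤ (sys b₀ g A j).1 →
      (sys b₀ g A j').2 i = (sys b₀ g A j).2 i := by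
    intro j j' hle
    induction j', hle using Nat.le_induction with
    | base => intro i _; rfl
    | succ j'' hj ih =>
      intro i hi
      rw [hcoh j'' i (le_trans hi (ht_mono j j'' hj)), ih i hi]
  have hBeq : ∀ j i, i ≤ (sys b₀ g A j).1 →
      (sys b₀ g A i).2 i = (sys b₀ g A j).2 i := by
    intro j i hi
    rcases le_total i j with h | h
    · exact (hcoh' i j h i (ht_lb i)).symm
    · exact hcoh' j i h i hi
  -- block estimate
  have hblock : ∀ j, ν (prodAB A (fun i => (sys b₀ g A i).2 i) ((sys b₀ g A (j+1)).1))
      ≤ 1/2 * ν (prodAB A (fun i => (sys b₀ g A i).2 i) ((sys b₀ g A j).1)) := by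
    intro j
    rw [ht_step j, prodAB_add]
    refine le_trans (hsub _ _) (mul_le_mul_of_nonneg_right ?_ (hnonneg _))
    rw [prodAB_congr _ (fun i => A ((sys b₀ g A j).1 + i)) _
      ((g (fun i => A ((sys b₀ g A j).1 + i))).1) _ (fun _ _ _ => rfl) ?_]
    · exact hg4 _ (fun i => hA _)
    · intro i hi1 hi2
      show (sys b₀ g A ((sys b₀ g A j).1 + i)).2 ((sys b₀ g A j).1 + i)
        = (g (fun i => A ((sys b₀ g A j).1 + i))).1 i
      have h1 : (sys b₀ g A j).1 + i ≤ (sys b₀ g A (j+1)).1 := by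
        rw [ht_step j]; omega
      rw [hBeq (j+1) ((sys b₀ g A j).1 + i) h1]
      simp only [sys]
      rw [if_neg (show ¬((sys b₀ g A j).1 + i ≤ (sys b₀ g A j).1) by omega),
        Nat.add_sub_cancel_left]
  have hgeo : ∀ j, ν (prodAB A (fun i => (sys b₀ g A i).2 i) ((sys b₀ g A j).1))
      ≤ K * (1/2) ^ j := by
    intro j
    induction j with
    | zero =>
      show ν (prodAB A (fun i => (sys b₀ g A i).2 i) ((sys b₀ g A 0).1)) ≤ K * (1/2:ℝ)^0
      have h0 : (sys b₀ g A 0).1 = 0 := rfl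
      rw [h0]
      simpa [prodAB] using hKν1
    | succ j ih =>
      refine le_trans (hblock j) ?_
      have h3 := mul_le_mul_of_nonneg_left ih (by norm_num : (0:ℝ) ≤ 1/2)
      have h4 : (1/2:ℝ) * (K * (1/2)^j) = K * (1/2)^(j+1) := by ring
      linarith
  -- crude bound
  have hpow : ∀ (A' : ℕ → Matrix (Fin N) (Fin M) ℝ) (B' : ℕ → Matrix (Fin M) (Fin N) ℝ)
      (m : ℕ), (∀ i, A' i ∈ 𝒜) → (∀ i, B' i ∈ ℬ) → ν (prodAB A' B' m) ≤ K ^ m * K := by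
    intro A' B' m hA' hB'
    induction m with
    | zero => simpa [prodAB] using hKν1
    | succ m ih =>
      show ν ((A' (m+1) * B' (m+1)) * prodAB A' B' m) ≤ K^(m+1) * K
      refine le_trans (hsub _ _) ?_
      have h1 : ν (A' (m+1) * B' (m+1)) ≤ K := hKmem _ (hA' _) _ (hB' _)
      have h2 : ν (A' (m+1) * B' (m+1)) * ν (prodAB A' B' m) ≤ K * (K ^ m * K) :=
        mul_le_mul h1 ih (hnonneg _) hK0
      have h3 : K * (K ^ m * K) = K^(m+1) * K := by ring
      linarith
  intro n hn1
  set t : ℕ → ℕ := fun j => (sys b₀ g A j).1 with htdef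
  have hex : ∃ jj, t jj ≤ n ∧ n < t (jj+1) := by
    by_contra hcon
    push_neg at hcon
    have hall : ∀ jj, t jj ≤ n := by
      intro jj
      induction jj with
      | zero =>
        show (sys b₀ g A 0).1 ≤ n
        rw [show (sys b₀ g A 0).1 = 0 from rfl]
        exact Nat.zero_le n
      | succ jj ih => exact hcon jj ih
    have h1 := hall (n+1)
    have h2 : n + 1 ≤ t (n+1) := ht_lb (n+1)
    omega
  obtain ⟨j, hj1, hj2⟩ := hex
  have hlen : n - t j ≤ n₀ := by
    have h1 : t (j+1) = t j + (g (fun i => A (t j + i))).2 := ht_step j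
    have h2 := hg3 (fun i => A (t j + i))
    omega
  have hdec := prodAB_add A (fun i => (sys b₀ g A i).2 i) (t j) (n - t j)
  rw [Nat.add_sub_cancel' hj1] at hdec
  rw [hdec]
  refine le_trans (hsub _ _) ?_
  have hpart : ν (prodAB (fun i => A (t j + i))
      (fun i => (fun i' => (sys b₀ g A i').2 i') (t j + i)) (n - t j)) ≤ K ^ n₀ * K := by
    refine le_trans (hpow _ _ _ (fun i => hA _) (fun i => hmem _ _)) ?_
    have hK' : K ^ (n - t j) ≤ K ^ n₀ := pow_le_pow_right₀ hK1 hlen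
    exact mul_le_mul_of_nonneg_right hK' hK0
  have hhalf : ((1:ℝ)/2)^j ≤ 2 * lam ^ n := by
    have hnlt : n < (j+1) * n₀ := lt_of_lt_of_le hj2 (ht_ub (j+1))
    have hexp : (n:ℝ) * ((n₀:ℝ))⁻¹ ≤ (j:ℝ) + 1 := by
      rw [mul_inv_le_iff₀ hn₀pos]
      have hc : (n:ℝ) ≤ (((j+1) * n₀ : ℕ) : ℝ) := by exact_mod_cast hnlt.le
      push_cast at hc
      linarith
    have hlamn : lam ^ n = (1/2 : ℝ) ^ ((n₀:ℝ)⁻¹ * n) := by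
      rw [hlamdef, ← Real.rpow_natCast ((1/2:ℝ) ^ ((n₀:ℝ)⁻¹)) n, ← Real.rpow_mul (by norm_num)]
    have hmono : (1/2:ℝ) ^ ((j:ℝ) + 1) ≤ (1/2:ℝ) ^ ((n₀:ℝ)⁻¹ * n) := by
      apply Real.rpow_le_rpow_of_exponent_ge (by norm_num) (by norm_num)
      calc (n₀:ℝ)⁻¹ * n = (n:ℝ) * (n₀:ℝ)⁻¹ := by ring
        _ ≤ (j:ℝ) + 1 := hexp
    have hsplit : (1/2:ℝ) ^ ((j:ℝ) + 1) = (1/2:ℝ)^(j:ℝ) * (1/2) := by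
      rw [Real.rpow_add (by norm_num), Real.rpow_one]
    have hjcast : (1/2:ℝ)^(j:ℕ) = (1/2:ℝ)^(j:ℝ) := (Real.rpow_natCast _ j).symm
    rw [hjcast, hlamn]
    nlinarith [hmono, hsplit]
  refine le_trans (mul_le_mul hpart (hgeo j) (hnonneg _) (by positivity)) ?_
  have h5 : (K^n₀*K)*(K*(1/2:ℝ)^j) = (K^n₀*K*K)*((1/2:ℝ)^j) := by ring
  have h6 : (K^n₀*K*K)*(2*lam^n) = K^n₀*K*K*2*lam^n := by ring
  have h7 := mul_le_mul_of_nonneg_left hhalf (show (0:ℝ) ≤ K^n₀*K*K by positivity)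
  linarith
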